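/- Let N = 2. The Hessian matrix of V at the point (θ₁, θ₂) = (0, π/3) equals [[3/2, −3/2],[−3/2, 3/2]]; its eigenvalues are 3 and 0. In particular (0, π/3) is a nondegenerate local minimum of V in the sense that the Hessian is positive semidefinite with one-dimensional kernel spanned by (1,1). -/

import Mathlib

/-!
For two vortices `V θ = g (θ 0 - θ 1)` with `g u = -(cos u + log (2 - 2 cos u) / 2)`. By the
chain rule the Hessian is `g'' (θ 0 - θ 1)` times the matrix `!![1, -1; -1, 1]`, where
`g'' u = cos u + 1 / (2 - 2 cos u)` equals `1/2 + 1 = 3/2` at `u = -π/3`. The matrix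
`!![a, -a; -a, a]` sends `v` to `a (v 0 - v 1) • (1, -1)`: its quadratic form is `a (v 0 - v 1)²`,
its kernel is spanned by `(1, 1)`, and `(1, -1)` is an eigenvector for `2a`.
-/

open Real Finset Matrix

noncomputable def vortexPotential (N : ℕ) (θ : Fin N → ℝ) : ℝ :=
  - ∑ i : Fin N, ∑ j : Fin N,
      if i < j then
        Real.cos (θ i - θ j) + (1 / 2) * Real.log (2 - 2 * Real.cos (θ i - θ j))
      else 0

noncomputable def vortexHessian (N : ℕ) (θ : Fin N → ℝ) : Matrix (Fin N) (Fin N) ℝ :=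
  fun i j => iteratedFDeriv ℝ 2 (vortexPotential N) θ ![Pi.single i 1, Pi.single j 1]

open Filter Topology

theorem iteratedFDeriv_two_comp_apply_of_hasDerivAt {𝕜 E : Type*} [NontriviallyNormedField 𝕜]
    [NormedAddCommGroup E] [NormedSpace 𝕜 E] {f f' : 𝕜 → 𝕜} {f'' : 𝕜} (L : E →L[𝕜] 𝕜)
    {x : E} (hf : ∀ᶠ u in 𝓝 (L x), HasDerivAt f (f' u) u) (hf' : HasDerivAt f' f'' (L x))
    (v w : E) :
    iteratedFDeriv 𝕜 2 (f ∘ L) x ![v, w] = f'' * L v * L w := by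
  have hfderiv : fderiv 𝕜 (f ∘ L) =ᶠ[𝓝 x] fun y => f' (L y) • L := by
    filter_upwards [L.continuous.continuousAt.eventually hf] with y hy
    exact (hy.comp_hasFDerivAt y L.hasFDerivAt).fderiv
  have hsecond : HasFDerivAt (fun y => f' (L y) • L) ((f'' • L).smulRight L) x :=
    (hf'.comp_hasFDerivAt x L.hasFDerivAt).smul_const L
  rw [iteratedFDeriv_two_apply, (hsecond.congr_of_eventuallyEq hfderiv).fderiv]
  simp [mul_assoc]

noncomputable def pairPotential (u : ℝ) : ℝ := -(cos u + 1 / 2 * log (2 - 2 * cos u))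

lemma vortexPotential_two (θ : Fin 2 → ℝ) : vortexPotential 2 θ = pairPotential (θ 0 - θ 1) := by
  simp [vortexPotential, pairPotential]

noncomputable def pairStiffness (u : ℝ) : ℝ := cos u + 1 / (2 - 2 * cos u)

lemma hasDerivAt_two_sub_two_mul_cos (u : ℝ) :
    HasDerivAt (fun u => 2 - 2 * cos u) (2 * sin u) u := by
  simpa using ((hasDerivAt_cos u).const_mul 2).const_sub 2

lemma hasDerivAt_pairPotential {u : ℝ} (hu : cos u ≠ 1) :
    HasDerivAt pairPotential (sin u - sin u / (2 - 2 * cos u)) u := by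
  have hden : 2 - 2 * cos u ≠ 0 := by contrapose! hu; linarith
  refine ((hasDerivAt_cos u).add
    (((hasDerivAt_two_sub_two_mul_cos u).log hden).const_mul (1 / 2))).neg.congr_deriv ?_
  field_simp
  ring

lemma hasDerivAt_pairPotential_deriv {u : ℝ} (hu : cos u ≠ 1) :
    HasDerivAt (fun u => sin u - sin u / (2 - 2 * cos u)) (pairStiffness u) u := by
  have hden : 2 - 2 * cos u ≠ 0 := by contrapose! hu; linarith
  refine ((hasDerivAt_sin u).sub
    ((hasDerivAt_sin u).div (hasDerivAt_two_sub_two_mul_cos u) hden)).congr_deriv ?_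
  rw [pairStiffness]
  field_simp
  linear_combination sin_sq_add_cos_sq u

lemma vortexHessian_two {θ : Fin 2 → ℝ} (hθ : cos (θ 0 - θ 1) ≠ 1) :
    vortexHessian 2 θ =
      !![pairStiffness (θ 0 - θ 1), -pairStiffness (θ 0 - θ 1);
        -pairStiffness (θ 0 - θ 1), pairStiffness (θ 0 - θ 1)] := by
  let L : (Fin 2 → ℝ) →L[ℝ] ℝ := ContinuousLinearMap.proj (R := ℝ) (φ := fun _ => ℝ) 0 -
    ContinuousLinearMap.proj (R := ℝ) (φ := fun _ => ℝ) 1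
  have hV : vortexPotential 2 = pairPotential ∘ L := funext vortexPotential_two
  have hsep : ∀ᶠ u in 𝓝 (L θ), cos u ≠ 1 :=
    (isOpen_ne_fun continuous_cos continuous_const).mem_nhds hθ
  ext i j
  rw [vortexHessian, hV, iteratedFDeriv_two_comp_apply_of_hasDerivAt L
    (hsep.mono fun u => hasDerivAt_pairPotential) (hasDerivAt_pairPotential_deriv hθ)]
  fin_cases i <;> fin_cases j <;> simp [L]

-- `!![a, -a; -a, a]` is `a` times the Laplacian of the graph with two vertices and one edge.
lemma mulVec_two_laplacian (a : ℝ) (v : Fin 2 → ℝ) :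
    !![a, -a; -a, a] *ᵥ v = (a * (v 0 - v 1)) • ![1, -1] := by
  ext i; fin_cases i <;> simp [mulVec, dotProduct] <;> ring

lemma exists_mulVec_eq_smul_two_laplacian_iff (a μ : ℝ) :
    (∃ v : Fin 2 → ℝ, v ≠ 0 ∧ !![a, -a; -a, a] *ᵥ v = μ • v) ↔ μ = 2 * a ∨ μ = 0 := by
  constructor
  · rintro ⟨v, hv, hμ⟩
    rw [mulVec_two_laplacian] at hμ
    have h0 : a * (v 0 - v 1) = μ * v 0 := by simpa using congrFun hμ 0
    have h1 : -(a * (v 0 - v 1)) = μ * v 1 := by simpa using congrFun hμ 1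
    by_contra! hne
    have hsum : v 0 + v 1 = 0 :=
      (mul_eq_zero.mp (by linear_combination -h0 - h1 : μ * (v 0 + v 1) = 0)).resolve_left hne.2
    have hdiff : v 0 - v 1 = 0 :=
      (mul_eq_zero.mp (by linear_combination h1 - h0 : (μ - 2 * a) * (v 0 - v 1) = 0)).resolve_left
        (sub_ne_zero.mpr hne.1)
    exact hv (funext fun i => by fin_cases i <;> simp <;> linarith)
  · rintro (rfl | rfl)
    · refine ⟨![1, -1], by simp [funext_iff], ?_⟩
      rw [mulVec_two_laplacian]
      ext i; fin_cases i <;> simp <;> ring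
    · exact ⟨![1, 1], by simp [funext_iff], by rw [mulVec_two_laplacian]; simp⟩

lemma posSemidef_two_laplacian {a : ℝ} (ha : 0 ≤ a) : (!![a, -a; -a, a]).PosSemidef := by
  refine .of_dotProduct_mulVec_nonneg ?_ fun x => ?_
  · ext i j; fin_cases i <;> fin_cases j <;> simp
  · have hquad : star x ⬝ᵥ (!![a, -a; -a, a] *ᵥ x) = a * (x 0 - x 1) ^ 2 := by
      rw [mulVec_two_laplacian]; simp [dotProduct]; ring
    rw [hquad]; positivity

lemma mulVec_two_laplacian_eq_zero_iff {a : ℝ} (ha : a ≠ 0) (v : Fin 2 → ℝ) :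
    !![a, -a; -a, a] *ᵥ v = 0 ↔ ∃ c : ℝ, v = c • ![1, 1] := by
  rw [mulVec_two_laplacian, smul_eq_zero, mul_eq_zero, sub_eq_zero]
  constructor
  · rintro ((h | h) | h)
    · exact absurd h ha
    · exact ⟨v 0, funext fun i => by fin_cases i <;> simp [h]⟩
    · simp [funext_iff] at h
  · rintro ⟨c, rfl⟩
    simp

lemma pairStiffness_neg_pi_div_three : pairStiffness (-(π / 3)) = 3 / 2 := by
  norm_num [pairStiffness]

/-- For `N = 2`, the Hessian of `V` at `(0, π/3)` equals
`[[3/2, -3/2],[-3/2, 3/2]]`, its eigenvalues are `3` and `0`, and it is positive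
semidefinite with one-dimensional kernel spanned by `(1,1)`; i.e. `(0, π/3)` is a
nondegenerate local minimum of `V`. -/
theorem two_vortex_triangle_hessian :
    vortexHessian 2 ![0, π / 3] = !![3/2, -3/2; -3/2, 3/2] ∧
    (∀ μ : ℝ, (∃ v : Fin 2 → ℝ, v ≠ 0 ∧
        (vortexHessian 2 ![0, π / 3]).mulVec v = μ • v) ↔ (μ = 3 ∨ μ = 0)) ∧
    (vortexHessian 2 ![0, π / 3]).PosSemidef ∧
    (∀ v : Fin 2 → ℝ, (vortexHessian 2 ![0, π / 3]).mulVec v = 0 ↔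
      ∃ c : ℝ, v = c • ![1, 1]) := by
  have hsep : cos ((![0, π / 3] : Fin 2 → ℝ) 0 - ![0, π / 3] 1) ≠ 1 := by
    norm_num
  have hH : vortexHessian 2 ![0, π / 3] = !![3/2, -(3/2); -(3/2), 3/2] := by
    rw [vortexHessian_two hsep]
    norm_num [pairStiffness_neg_pi_div_three]
  refine ⟨hH.trans (by rw [neg_div]), ?_⟩
  rw [hH]
  refine ⟨fun μ => ?_, posSemidef_two_laplacian (by norm_num),
    mulVec_two_laplacian_eq_zero_iff (by norm_num)⟩
  rw [exists_mulVec_eq_smul_two_laplacian_iff]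
  norm_num
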